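/- arXiv:1207.1583 — 4 statements merged into one kernel-verified Lean document; each statement's English description precedes it below -/
import Mathlib

section
/- Let N ∈ ℕ, y ∈ ℝ^N, 0 < R < ∞, and let f be a real-valued function defined on a set containing all vertices A_δ(y,R), δ ∈ {−1,1}^N, of the hypercube C(y,R). Then, with ℝ^N equipped with the ℓ_1-norm ‖x‖_1 = Σ_{i=1}^N |x_i|, the Lipschitz constant of the coordinatewise-affine interpolation Λ(f, C(y,R)): C(y,R) → ℝ equals the Lipschitz constant of the restriction of f to the vertex set {A_δ(y,R) : δ ∈ {−1,1}^N}. -/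
noncomputable section

open Filter Topology
open scoped Classical

/-- The sign `±1` associated with a Boolean. -/
def bsgn (b : Bool) : ℝ := if b then 1 else -1

/-- The hypercube `C(y,R) = {x : max_i |x_i − y_i| ≤ R/2}` with centre `y` and
edge length `R`. -/
def cube {n : ℕ} (y : Fin n → ℝ) (R : ℝ) : Set (Fin n → ℝ) :=
  {x | ∀ i, |x i - y i| ≤ R / 2}

/-- The vertex `A_δ(y,R) = y + (R/2)δ` of the hypercube `C(y,R)`, `δ ∈ {−1,1}^n`. -/
def vertex {n : ℕ} (y : Fin n → ℝ) (R : ℝ) (δ : Fin n → Bool) : Fin n → ℝ :=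
  fun i => y i + R / 2 * bsgn (δ i)

/-- A function `Φ` has property (AF) on a (convex) set `B ⊆ ℝ^n` if its restriction
to every segment contained in `B` and parallel to a coordinate axis is affine. -/
def HasAF {n : ℕ} (B : Set (Fin n → ℝ)) (Φ : (Fin n → ℝ) → ℝ) : Prop :=
  ∀ a b : Fin n → ℝ, a ∈ B → b ∈ B → (∃ i : Fin n, ∀ j, j ≠ i → a j = b j) →
    ∀ t : ℝ, t ∈ Set.Icc (0 : ℝ) 1 →
      Φ (fun j => a j + t * (b j - a j)) = (1 - t) * Φ a + t * Φ b

/-- The coordinatewise-affine interpolation `Λ(f, C(y,R))` of `f` on the hypercube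
`C(y,R)`: the unique function with property (AF) on `C(y,R)` agreeing with `f` at
all `2^n` vertices (written here in its explicit multilinear form). -/
def lam {n : ℕ} (f : (Fin n → ℝ) → ℝ) (y : Fin n → ℝ) (R : ℝ)
    (x : Fin n → ℝ) : ℝ :=
  ∑ δ : Fin n → Bool,
    (∏ i, if δ i then (x i - y i + R / 2) / R else 1 - (x i - y i + R / 2) / R) *
      f (vertex y R δ)

/-- `g` is `L`-Lipschitz on the set `S` with respect to the `ℓ₁`-norm on `ℝ^n`. -/
def LipOnL1 {n : ℕ} (L : ℝ) (S : Set (Fin n → ℝ)) (g : (Fin n → ℝ) → ℝ) : Prop :=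
  ∀ x ∈ S, ∀ x' ∈ S, |g x - g x'| ≤ L * ∑ i, |x i - x' i|

/-!
Write `Λ(x) = ∑_δ W_x(δ) f(A_δ)` with nonnegative product weights summing to one. Changing only
the `i`-th coordinate of `x` by `s` changes `Λ` by `(2s/R) ∑_δ W_c(δ) bsgn(δ_i) f(A_δ)`, where `c`
is `x` moved to the midplane `c_i = y_i`. Since `W_c` does not see `δ_i`, pairing `δ` with its flip
in coordinate `i` turns this sum into half a `W_c`-average of differences of `f` across edges of
length `R`, so `Λ` is `L`-Lipschitz along each axis. Walking from `x` to `x'` one coordinate at a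
time gives the `ℓ₁` bound; the converse holds because `Λ = f` at the vertices.
-/

open Function

/-- The factors of `lam`, written affinely around the centre `y`. -/
def coordWeight (y R t : ℝ) (b : Bool) : ℝ := 1 / 2 + bsgn b * ((t - y) / R)

def vertexWeight {n : ℕ} (y : Fin n → ℝ) (R : ℝ) (x : Fin n → ℝ) (δ : Fin n → Bool) : ℝ :=
  ∏ i, coordWeight (y i) R (x i) (δ i)

section coordWeight

variable {y R t : ℝ}

lemma coordWeight_nonneg (hR : 0 < R) (h : |t - y| ≤ R / 2) (b : Bool) :
    0 ≤ coordWeight y R t b := by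
  have h' : |(t - y) / R| ≤ 1 / 2 := by
    rw [abs_div, abs_of_pos hR, div_le_iff₀ hR]; linarith
  rw [abs_le] at h'
  cases b <;> simp only [coordWeight, bsgn, if_true, Bool.false_eq_true, if_false] <;> linarith

lemma sum_coordWeight (y R t : ℝ) : ∑ b, coordWeight y R t b = 1 := by
  simp only [Fintype.sum_bool, coordWeight, bsgn, if_true, Bool.false_eq_true, if_false]; ring

lemma coordWeight_self (y R : ℝ) (b : Bool) : coordWeight y R y b = 1 / 2 := by
  simp [coordWeight]

lemma coordWeight_eq_mul_coordWeight_self (b : Bool) :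
    coordWeight y R t b = (1 + 2 * bsgn b * ((t - y) / R)) * coordWeight y R y b := by
  rw [coordWeight_self, coordWeight]; ring

lemma coordWeight_endpoint (hR : R ≠ 0) (b b' : Bool) :
    coordWeight y R (y + R / 2 * bsgn b') b = if b = b' then 1 else 0 := by
  have hmid : (y + R / 2 * bsgn b' - y) / R = bsgn b' / 2 := by field_simp; ring
  simp only [coordWeight, hmid]
  cases b <;> cases b' <;> norm_num [bsgn]

end coordWeight

lemma sum_prod_apply_eq_one {ι : Type*} [Fintype ι] [DecidableEq ι] (w : ι → Bool → ℝ)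
    (hw : ∀ i, ∑ b, w i b = 1) : ∑ δ : ι → Bool, ∏ i, w i (δ i) = 1 := by
  rw [← Fintype.prod_sum, Finset.prod_eq_one fun i _ => hw i]

/-- Pairing `δ` with `δ` flipped at `i`, which changes the sign of `bsgn (δ i)`. -/
lemma sum_bsgn_mul_eq_half_sum_sub {ι : Type*} [Fintype ι] [DecidableEq ι] (i : ι)
    (g : (ι → Bool) → ℝ) :
    ∑ δ : ι → Bool, bsgn (δ i) * g δ =
      1 / 2 * ∑ δ : ι → Bool, bsgn (δ i) * (g δ - g (update δ i (!δ i))) := by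
  have hflip : Involutive fun δ : ι → Bool => update δ i (!δ i) := fun δ => by simp
  have hswap := Equiv.sum_comp (hflip.toPerm _) fun δ => bsgn (δ i) * g δ
  simp only [Involutive.coe_toPerm, update_self] at hswap
  have hneg : ∀ δ : ι → Bool, bsgn (!δ i) = -bsgn (δ i) := fun δ => by
    cases δ i <;> simp [bsgn]
  simp only [hneg, neg_mul, Finset.sum_neg_distrib] at hswap
  simp only [mul_sub, Finset.sum_sub_distrib]
  linarith

section vertexWeight

variable {n : ℕ} {y : Fin n → ℝ} {R : ℝ}

lemma lam_eq_sum_vertexWeight (hR : R ≠ 0) (f : (Fin n → ℝ) → ℝ) (x : Fin n → ℝ) :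
    lam f y R x = ∑ δ, vertexWeight y R x δ * f (vertex y R δ) := by
  refine Finset.sum_congr rfl fun δ _ => ?_
  congr 1
  refine Finset.prod_congr rfl fun i _ => ?_
  cases δ i <;> simp only [coordWeight, bsgn, if_true, Bool.false_eq_true, if_false] <;>
    field_simp <;> ring

lemma sum_vertexWeight (y : Fin n → ℝ) (R : ℝ) (x : Fin n → ℝ) :
    ∑ δ, vertexWeight y R x δ = 1 :=
  sum_prod_apply_eq_one _ fun _ => sum_coordWeight _ _ _

lemma vertexWeight_nonneg (hR : 0 < R) {x : Fin n → ℝ} (hx : x ∈ cube y R) (δ : Fin n → Bool) :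
    0 ≤ vertexWeight y R x δ :=
  Finset.prod_nonneg fun i _ => coordWeight_nonneg hR (hx i) _

lemma vertexWeight_vertex (hR : R ≠ 0) (δ δ' : Fin n → Bool) :
    vertexWeight y R (vertex y R δ') δ = if δ = δ' then 1 else 0 := by
  simp only [vertexWeight, vertex, coordWeight_endpoint hR, Finset.prod_boole, funext_iff,
    Finset.mem_univ, true_imp_iff]

lemma vertexWeight_update (x : Fin n → ℝ) (i : Fin n) (t : ℝ) (δ : Fin n → Bool) :
    vertexWeight y R (update x i t) δ =
      (1 + 2 * bsgn (δ i) * ((t - y i) / R)) * vertexWeight y R (update x i (y i)) δ := by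
  have hcompl : ∀ s, ∏ j ∈ {i}ᶜ, coordWeight (y j) R (update x i s j) (δ j) =
      ∏ j ∈ {i}ᶜ, coordWeight (y j) R (x j) (δ j) := fun s =>
    Finset.prod_congr rfl fun j hj => by rw [update_of_ne (by simpa using hj)]
  simp only [vertexWeight, Fintype.prod_eq_mul_prod_compl i, update_self, hcompl,
    coordWeight_eq_mul_coordWeight_self (t := t)]
  ring

lemma vertexWeight_update_of_apply_eq {c : Fin n → ℝ} {i : Fin n} (hci : c i = y i)
    (δ : Fin n → Bool) (b : Bool) :
    vertexWeight y R c (update δ i b) = vertexWeight y R c δ := by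
  have hcompl : ∏ j ∈ {i}ᶜ, coordWeight (y j) R (c j) (update δ i b j) =
      ∏ j ∈ {i}ᶜ, coordWeight (y j) R (c j) (δ j) :=
    Finset.prod_congr rfl fun j hj => by rw [update_of_ne (by simpa using hj)]
  simp only [vertexWeight, Fintype.prod_eq_mul_prod_compl i, hcompl, hci, coordWeight_self]

end vertexWeight

lemma vertex_mem_cube {n : ℕ} (y : Fin n → ℝ) {R : ℝ} (hR : 0 ≤ R) (δ : Fin n → Bool) :
    vertex y R δ ∈ cube y R := fun i => by
  have hR2 : 0 ≤ R / 2 := by positivity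
  cases h : δ i <;> simp [vertex, bsgn, h, abs_of_nonneg hR2]

lemma update_mem_cube {n : ℕ} {y x : Fin n → ℝ} {R : ℝ} (hx : x ∈ cube y R) (i : Fin n)
    {t : ℝ} (ht : |t - y i| ≤ R / 2) : update x i t ∈ cube y R := fun j => by
  rcases eq_or_ne j i with rfl | hj
  · simpa using ht
  · simpa [update_of_ne hj] using hx j

lemma cube_eq_pi {n : ℕ} (y : Fin n → ℝ) (R : ℝ) :
    cube y R = Set.univ.pi fun i => {t | |t - y i| ≤ R / 2} := by
  ext x; simp [cube]

lemma sum_abs_vertex_sub_vertex_flip {n : ℕ} (y : Fin n → ℝ) {R : ℝ} (hR : 0 ≤ R)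
    (δ : Fin n → Bool) (i : Fin n) :
    ∑ j, |vertex y R δ j - vertex y R (update δ i (!δ i)) j| = R := by
  rw [Finset.sum_eq_single i (fun j _ hj => by simp [vertex, update_of_ne hj]) (by simp)]
  cases h : δ i <;> simp [vertex, bsgn, h, hR]
  rw [show -(R / 2) - R / 2 = -R by ring, abs_neg, abs_of_nonneg hR]

lemma lam_vertex {n : ℕ} (f : (Fin n → ℝ) → ℝ) (y : Fin n → ℝ) {R : ℝ} (hR : R ≠ 0)
    (δ : Fin n → Bool) : lam f y R (vertex y R δ) = f (vertex y R δ) := by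
  simp [lam_eq_sum_vertexWeight hR, vertexWeight_vertex hR]

lemma lam_update_sub_lam_update {n : ℕ} (f : (Fin n → ℝ) → ℝ) (y : Fin n → ℝ) {R : ℝ}
    (hR : R ≠ 0) (x : Fin n → ℝ) (i : Fin n) (t t' : ℝ) :
    lam f y R (update x i t) - lam f y R (update x i t') = 2 * ((t - t') / R) *
      ∑ δ, bsgn (δ i) * (vertexWeight y R (update x i (y i)) δ * f (vertex y R δ)) := by
  rw [lam_eq_sum_vertexWeight hR, lam_eq_sum_vertexWeight hR, ← Finset.sum_sub_distrib,
    Finset.mul_sum]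
  refine Finset.sum_congr rfl fun δ _ => ?_
  rw [vertexWeight_update x i t, vertexWeight_update x i t']
  ring

lemma abs_sum_bsgn_mul_vertexWeight_le {n : ℕ} {f : (Fin n → ℝ) → ℝ} {y : Fin n → ℝ}
    {R L : ℝ} (hR : 0 < R) (hf : LipOnL1 L {v | ∃ δ, v = vertex y R δ} f)
    {c : Fin n → ℝ} (hc : c ∈ cube y R) {i : Fin n} (hci : c i = y i) :
    |∑ δ, bsgn (δ i) * (vertexWeight y R c δ * f (vertex y R δ))| ≤ L * R / 2 := by
  have hedge : ∀ δ : Fin n → Bool,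
      |bsgn (δ i) * (f (vertex y R δ) - f (vertex y R (update δ i (!δ i))))| ≤ L * R := by
    intro δ
    have hsgn : |bsgn (δ i)| = 1 := by cases δ i <;> simp [bsgn]
    rw [abs_mul, hsgn, one_mul]
    exact (hf _ ⟨δ, rfl⟩ _ ⟨_, rfl⟩).trans_eq (by rw [sum_abs_vertex_sub_vertex_flip y hR.le])
  rw [sum_bsgn_mul_eq_half_sum_sub]
  simp only [vertexWeight_update_of_apply_eq hci, ← mul_sub, mul_left_comm (bsgn _)]
  calc |1 / 2 * ∑ δ, vertexWeight y R c δ *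
          (bsgn (δ i) * (f (vertex y R δ) - f (vertex y R (update δ i (!δ i)))))|
      ≤ 1 / 2 * ∑ δ, vertexWeight y R c δ * (L * R) := by
        rw [abs_mul, abs_of_pos one_half_pos]
        refine mul_le_mul_of_nonneg_left ((Finset.abs_sum_le_sum_abs _ _).trans
          (Finset.sum_le_sum fun δ _ => ?_)) one_half_pos.le
        rw [abs_mul, abs_of_nonneg (vertexWeight_nonneg hR hc δ)]
        exact mul_le_mul_of_nonneg_left (hedge δ) (vertexWeight_nonneg hR hc δ)
    _ = L * R / 2 := by rw [← Finset.sum_mul, sum_vertexWeight]; ring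

lemma abs_lam_update_sub_le {n : ℕ} {f : (Fin n → ℝ) → ℝ} {y : Fin n → ℝ} {R L : ℝ}
    (hR : 0 < R) (hf : LipOnL1 L {v | ∃ δ, v = vertex y R δ} f)
    {x : Fin n → ℝ} (hx : x ∈ cube y R) (i : Fin n) (t : ℝ) :
    |lam f y R (update x i t) - lam f y R x| ≤ L * |t - x i| := by
  have hmid := abs_sum_bsgn_mul_vertexWeight_le hR hf
    (update_mem_cube hx i (by simp; positivity)) (update_self i (y i) x)
  have hslope := lam_update_sub_lam_update f y hR.ne' x i t (x i)
  rw [update_eq_self] at hslope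
  rw [hslope, abs_mul, abs_mul, abs_div, abs_of_pos hR, abs_two]
  calc 2 * (|t - x i| / R) * _ ≤ 2 * (|t - x i| / R) * (L * R / 2) := by gcongr
    _ = L * |t - x i| := by field_simp

/-- Moving one coordinate at a time from `x` to `x'` inside a box. -/
lemma lipOnL1_pi_of_forall_update {n : ℕ} {L : ℝ} {s : Fin n → Set ℝ}
    {g : (Fin n → ℝ) → ℝ}
    (hg : ∀ z ∈ Set.univ.pi s, ∀ i, ∀ t ∈ s i, |g (update z i t) - g z| ≤ L * |t - z i|) :
    LipOnL1 L (Set.univ.pi s) g := by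
  intro x hx x' hx'
  have key : ∀ u : Finset (Fin n),
      |g (u.piecewise x' x) - g x| ≤ L * ∑ j ∈ u, |x' j - x j| := by
    intro u
    induction u using Finset.induction_on with
    | empty => simp
    | insert i u hi ih =>
      have hstep := hg _ (u.piecewise_mem_set_pi hx' hx) i (x' i) (hx' i trivial)
      rw [u.piecewise_eq_of_notMem _ _ hi] at hstep
      rw [Finset.piecewise_insert, Finset.sum_insert hi, mul_add]
      exact (abs_sub_le _ _ _).trans (add_le_add hstep ih)
  simpa [abs_sub_comm] using key Finset.univ

lemma lipOnL1_lam_of_lipOnL1_vertices {n : ℕ} {f : (Fin n → ℝ) → ℝ} {y : Fin n → ℝ} {R L : ℝ}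
    (hR : 0 < R) (hf : LipOnL1 L {v | ∃ δ, v = vertex y R δ} f) :
    LipOnL1 L (cube y R) (lam f y R) := by
  rw [cube_eq_pi]
  exact lipOnL1_pi_of_forall_update fun z hz i t _ =>
    abs_lam_update_sub_le hR hf ((cube_eq_pi y R).symm ▸ hz) i t

theorem lipschitz_lam_eq_lipschitz_vertices_general (N : ℕ)
    (y : Fin N → ℝ) (R : ℝ) (hR : 0 < R) (f : (Fin N → ℝ) → ℝ)
    (L : ℝ) :
    LipOnL1 L {v | ∃ δ : Fin N → Bool, v = vertex y R δ} f ↔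
      LipOnL1 L (cube y R) (lam f y R) := by
  refine ⟨lipOnL1_lam_of_lipOnL1_vertices hR, ?_⟩
  rintro hlam _ ⟨δ, rfl⟩ _ ⟨δ', rfl⟩
  simpa only [lam_vertex f y hR.ne'] using
    hlam _ (vertex_mem_cube y hR.le δ) _ (vertex_mem_cube y hR.le δ')

/-- **Statement 6 (Lemma 3.2).** With `ℝ^N` equipped with the `ℓ₁`-norm, the Lipschitz
constant of the coordinatewise-affine interpolation `Λ(f, C(y,R))` on `C(y,R)` equals
the Lipschitz constant of the restriction of `f` to the vertex set
`{A_δ(y,R) : δ ∈ {−1,1}^N}` (expressed here as: for every `L ≥ 0`, `f` is `L`-Lipschitz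
on the vertices iff `Λ(f,C(y,R))` is `L`-Lipschitz on the cube). -/
theorem lipschitz_lam_eq_lipschitz_vertices (N : ℕ) (hN : 0 < N)
    (y : Fin N → ℝ) (R : ℝ) (hR : 0 < R) (f : (Fin N → ℝ) → ℝ)
    (L : ℝ) (hL : 0 ≤ L) :
    LipOnL1 L {v | ∃ δ : Fin N → Bool, v = vertex y R δ} f ↔
      LipOnL1 L (cube y R) (lam f y R) :=
  lipschitz_lam_eq_lipschitz_vertices_general N y R hR f L
end
end

section
/- Let N ∈ ℕ, y ∈ ℝ^N, 0 < R < ∞, and let f be a real-valued function defined on a set containing all vertices A_δ(y,R), δ ∈ {−1,1}^N, of C(y,R). Then Λ(f, C(y,R)) is differentiable at every point x in the interior of C(y,R), and for every i ∈ {1,…,N}, |∂Λ(f, C(y,R))/∂x_i (x)| ≤ L, where L is the Lipschitz constant (with respect to the ℓ_1-norm on ℝ^N) of the restriction of f to the vertex set {A_δ(y,R) : δ ∈ {−1,1}^N}. -/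
noncomputable section

open Filter Topology
open scoped Classical

/-!
With `p = (x - y + R/2)/R`, `Λ(f, C(y,R))(x)` is the multilinear extension
`F(p) = ∑_δ ∏_k w(p_k, δ_k) g(δ)` of the vertex values `g(δ) = f(A_δ)`, where `w(t, b)` is `t`
or `1 - t`; in particular it is a polynomial. `F` is affine in each coordinate, so
`∂_i F(p) = F(p[i ↦ 1]) - F(p[i ↦ 0])`. Reindexing the second sum by flipping `δ_i` writes this
as `∑_δ ∏_k w(p[i ↦ 1]_k, δ_k) (g(δ) - g(δ'))` with `δ'` the flipped sign vector: an average
with nonnegative weights (for `p ∈ [0,1]^N`) of differences bounded by `L ‖A_δ - A_δ'‖₁ = L R`.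
The chain rule contributes the factor `1/R`.
-/

def bernoulliWeight (t : ℝ) (b : Bool) : ℝ := if b then t else 1 - t

namespace bernoulliWeight

@[simp] lemma apply_true (t : ℝ) : bernoulliWeight t true = t := rfl

@[simp] lemma apply_false (t : ℝ) : bernoulliWeight t false = 1 - t := rfl

lemma nonneg {t : ℝ} (ht : t ∈ Set.Icc (0 : ℝ) 1) (b : Bool) : 0 ≤ bernoulliWeight t b := by
  cases b <;> simp [ht.1, ht.2]

lemma eq_one_sub_mul_add_mul (t : ℝ) (b : Bool) :
    bernoulliWeight t b = (1 - t) * bernoulliWeight 0 b + t * bernoulliWeight 1 b := by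
  cases b <;> simp

lemma zero_not (b : Bool) : bernoulliWeight 0 (!b) = bernoulliWeight 1 b := by
  cases b <;> simp

@[fun_prop]
lemma differentiable (b : Bool) : Differentiable ℝ (bernoulliWeight · b) := by
  cases b <;> simp only [apply_true, apply_false] <;> fun_prop

end bernoulliWeight

section MultilinearExtension

variable {ι : Type*} [Fintype ι] [DecidableEq ι]

def multilinearExtension (g : (ι → Bool) → ℝ) (p : ι → ℝ) : ℝ :=
  ∑ δ, (∏ k, bernoulliWeight (p k) (δ k)) * g δ

lemma sum_prod_bernoulliWeight (p : ι → ℝ) :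
    ∑ δ : ι → Bool, ∏ k, bernoulliWeight (p k) (δ k) = 1 := by
  rw [← Fintype.prod_sum (fun k b => bernoulliWeight (p k) b)]
  simp

lemma differentiable_multilinearExtension (g : (ι → Bool) → ℝ) :
    Differentiable ℝ (multilinearExtension g) := by
  unfold multilinearExtension
  fun_prop

variable (g : (ι → Bool) → ℝ) (p : ι → ℝ) (i : ι)

lemma multilinearExtension_update (t : ℝ) :
    multilinearExtension g (Function.update p i t) =
      (1 - t) * multilinearExtension g (Function.update p i 0) +
        t * multilinearExtension g (Function.update p i 1) := by
  simp only [multilinearExtension, Finset.mul_sum, ← Finset.sum_add_distrib]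
  refine Finset.sum_congr rfl fun δ _ => ?_
  simp only [Function.apply_update (fun k s => bernoulliWeight s (δ k)),
    Finset.prod_update_of_mem (Finset.mem_univ i)]
  rw [bernoulliWeight.eq_one_sub_mul_add_mul t]
  ring

lemma multilinearExtension_update_zero :
    multilinearExtension g (Function.update p i 0) =
      ∑ δ, (∏ k, bernoulliWeight (Function.update p i 1 k) (δ k)) *
        g (Function.update δ i (!δ i)) := by
  have hflip : Function.Involutive fun δ : ι → Bool => Function.update δ i (!δ i) :=
    fun δ => by simp
  rw [multilinearExtension, ← hflip.bijective.sum_comp]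
  refine Finset.sum_congr rfl fun δ _ => ?_
  congr 1
  refine Finset.prod_congr rfl fun k _ => ?_
  rcases eq_or_ne k i with rfl | hk
  · simp [bernoulliWeight.zero_not]
  · simp [hk]

lemma multilinearExtension_update_one_sub_update_zero :
    multilinearExtension g (Function.update p i 1) - multilinearExtension g (Function.update p i 0) =
      ∑ δ, (∏ k, bernoulliWeight (Function.update p i 1 k) (δ k)) *
        (g δ - g (Function.update δ i (!δ i))) := by
  rw [multilinearExtension_update_zero, multilinearExtension, ← Finset.sum_sub_distrib]
  simp only [mul_sub]

lemma abs_multilinearExtension_update_one_sub_update_zero_le {M : ℝ}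
    (hp : ∀ k, p k ∈ Set.Icc (0 : ℝ) 1)
    (hg : ∀ δ : ι → Bool, |g δ - g (Function.update δ i (!δ i))| ≤ M) :
    |multilinearExtension g (Function.update p i 1) -
      multilinearExtension g (Function.update p i 0)| ≤ M := by
  have hp₁ : ∀ k, Function.update p i 1 k ∈ Set.Icc (0 : ℝ) 1 := by
    intro k
    rcases eq_or_ne k i with rfl | hk
    · simp
    · simpa [hk] using hp k
  have hw : ∀ δ : ι → Bool, 0 ≤ ∏ k, bernoulliWeight (Function.update p i 1 k) (δ k) :=
    fun δ => Finset.prod_nonneg fun k _ => bernoulliWeight.nonneg (hp₁ k) _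
  rw [multilinearExtension_update_one_sub_update_zero]
  calc _ ≤ ∑ δ : ι → Bool, (∏ k, bernoulliWeight (Function.update p i 1 k) (δ k)) * M := by
        refine (Finset.abs_sum_le_sum_abs _ _).trans (Finset.sum_le_sum fun δ _ => ?_)
        rw [abs_mul, abs_of_nonneg (hw δ)]
        exact mul_le_mul_of_nonneg_left (hg δ) (hw δ)
    _ = M := by rw [← Finset.sum_mul, sum_prod_bernoulliWeight, one_mul]

lemma hasDerivAt_multilinearExtension_update (t : ℝ) :
    HasDerivAt (fun t => multilinearExtension g (Function.update p i t))
      (multilinearExtension g (Function.update p i 1) -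
        multilinearExtension g (Function.update p i 0)) t := by
  have h_affine : (fun t => multilinearExtension g (Function.update p i t)) = fun t =>
      multilinearExtension g (Function.update p i 0) + t *
        (multilinearExtension g (Function.update p i 1) -
          multilinearExtension g (Function.update p i 0)) :=
    funext fun t => by rw [multilinearExtension_update]; ring
  rw [h_affine]
  exact (((hasDerivAt_id' t).mul_const _).const_add _).congr_deriv (one_mul _)

lemma fderiv_multilinearExtension_apply_single :
    fderiv ℝ (multilinearExtension g) p (Pi.single i 1) =
      multilinearExtension g (Function.update p i 1) -
        multilinearExtension g (Function.update p i 0) := by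
  have h := (differentiable_multilinearExtension g (Function.update p i (p i))).hasFDerivAt
    |>.comp_hasDerivAt (p i) (hasDerivAt_update p i (p i))
  rw [Function.update_eq_self] at h
  exact h.unique (hasDerivAt_multilinearExtension_update g p i (p i))

end MultilinearExtension

section Cube

variable {ι : Type*} [Fintype ι]

def cubeCoords (y : ι → ℝ) (R : ℝ) (x : ι → ℝ) : ι → ℝ :=
  fun k => (x k - y k + R / 2) / R

lemma hasFDerivAt_cubeCoords (y : ι → ℝ) (R : ℝ) (x : ι → ℝ) :
    HasFDerivAt (cubeCoords y R) (R⁻¹ • ContinuousLinearMap.id ℝ (ι → ℝ)) x := by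
  have h : cubeCoords y R = fun x => R⁻¹ • (x - y + fun _ => R / 2) := by
    funext x k
    simp [cubeCoords, div_eq_inv_mul]
  rw [h]
  exact (((hasFDerivAt_id x).sub_const y).add_const _).const_smul R⁻¹

lemma cubeCoords_mem_Icc {n : ℕ} {y x : Fin n → ℝ} {R : ℝ} (hR : 0 < R) (hx : x ∈ cube y R)
    (k : Fin n) : cubeCoords y R x k ∈ Set.Icc (0 : ℝ) 1 := by
  have hk := abs_le.1 (hx k)
  constructor
  · exact div_nonneg (by linarith) hR.le
  · rw [cubeCoords, div_le_one hR]
    linarith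

end Cube

lemma abs_bsgn_sub_bsgn_not (b : Bool) : |bsgn b - bsgn (!b)| = 2 := by
  cases b <;> norm_num [bsgn]

lemma sum_abs_vertex_sub_vertex_update_not {n : ℕ} (y : Fin n → ℝ) {R : ℝ} (hR : 0 ≤ R)
    (δ : Fin n → Bool) (i : Fin n) :
    ∑ k, |vertex y R δ k - vertex y R (Function.update δ i (!δ i)) k| = R := by
  rw [Finset.sum_eq_single i (fun k _ hk => by simp [vertex, hk]) (by simp)]
  simp only [vertex, Function.update_self, add_sub_add_left_eq_sub, ← mul_sub, abs_mul,
    abs_bsgn_sub_bsgn_not, abs_of_nonneg (div_nonneg hR zero_le_two)]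
  ring

section Interpolation

variable {n : ℕ} (f : (Fin n → ℝ) → ℝ) (y : Fin n → ℝ) (R : ℝ) (x : Fin n → ℝ)

lemma lam_eq_multilinearExtension_comp :
    lam f y R = multilinearExtension (fun δ => f (vertex y R δ)) ∘ cubeCoords y R :=
  rfl

lemma hasFDerivAt_lam :
    HasFDerivAt (lam f y R)
      ((fderiv ℝ (multilinearExtension fun δ => f (vertex y R δ)) (cubeCoords y R x)).comp
        (R⁻¹ • ContinuousLinearMap.id ℝ (Fin n → ℝ))) x := by
  rw [lam_eq_multilinearExtension_comp]
  exact (differentiable_multilinearExtension _ _).hasFDerivAt.comp x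
    (hasFDerivAt_cubeCoords y R x)

lemma fderiv_lam_apply_single (i : Fin n) :
    fderiv ℝ (lam f y R) x (Pi.single i 1) =
      R⁻¹ * (multilinearExtension (fun δ => f (vertex y R δ))
          (Function.update (cubeCoords y R x) i 1) -
        multilinearExtension (fun δ => f (vertex y R δ))
          (Function.update (cubeCoords y R x) i 0)) := by
  rw [(hasFDerivAt_lam f y R x).fderiv, ContinuousLinearMap.comp_apply,
    smul_apply, ContinuousLinearMap.id_apply, map_smul,
    fderiv_multilinearExtension_apply_single, smul_eq_mul]

lemma abs_fderiv_lam_apply_single_le {L : ℝ} (hR : 0 < R) (hx : x ∈ cube y R)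
    (hf : LipOnL1 L {v | ∃ δ : Fin n → Bool, v = vertex y R δ} f) (i : Fin n) :
    |fderiv ℝ (lam f y R) x (Pi.single i 1)| ≤ L := by
  have h_edge : ∀ δ : Fin n → Bool,
      |f (vertex y R δ) - f (vertex y R (Function.update δ i (!δ i)))| ≤ L * R := fun δ => by
    simpa [sum_abs_vertex_sub_vertex_update_not y hR.le] using
      hf _ ⟨δ, rfl⟩ _ ⟨Function.update δ i (!δ i), rfl⟩
  have h_diff := abs_multilinearExtension_update_one_sub_update_zero_le _ _ i
    (cubeCoords_mem_Icc hR hx) h_edge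
  rw [fderiv_lam_apply_single, abs_mul, abs_inv, abs_of_pos hR, inv_mul_le_iff₀ hR]
  linarith

end Interpolation

theorem lam_differentiable_and_partial_bound_general (N : ℕ)
    (y : Fin N → ℝ) (R : ℝ) (hR : 0 < R) (f : (Fin N → ℝ) → ℝ)
    (x : Fin N → ℝ) (hx : ∀ i, |x i - y i| < R / 2) :
    DifferentiableAt ℝ (lam f y R) x ∧
      ∀ L : ℝ, LipOnL1 L {v | ∃ δ : Fin N → Bool, v = vertex y R δ} f →
        ∀ i : Fin N, |fderiv ℝ (lam f y R) x (Pi.single i 1)| ≤ L :=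
  ⟨(hasFDerivAt_lam f y R x).differentiableAt, fun _ hf =>
    abs_fderiv_lam_apply_single_le f y R x hR (fun k => (hx k).le) hf⟩

/-- The interpolation `Λ(f, C(y,R))` is differentiable at every
interior point `x` of `C(y,R)`, and each partial derivative `∂Λ/∂x_i(x)` is bounded
in absolute value by (any bound `L` for) the Lipschitz constant, with respect to the
`ℓ₁`-norm, of the restriction of `f` to the vertex set of `C(y,R)`. -/
theorem lam_differentiable_and_partial_bound (N : ℕ) (hN : 0 < N)
    (y : Fin N → ℝ) (R : ℝ) (hR : 0 < R) (f : (Fin N → ℝ) → ℝ)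
    (x : Fin N → ℝ) (hx : ∀ i, |x i - y i| < R / 2) :
    DifferentiableAt ℝ (lam f y R) x ∧
      ∀ L : ℝ, LipOnL1 L {v | ∃ δ : Fin N → Bool, v = vertex y R δ} f →
        ∀ i : Fin N, |fderiv ℝ (lam f y R) x (Pi.single i 1)| ≤ L :=
  lam_differentiable_and_partial_bound_general N y R hR f x hx
end
end

section
/- For every Lipschitz function f: ℓ_1 → ℝ with f(0)=0 and every x ∈ ℓ_1, the sequence (Q_n(f)(x))_{n=1}^∞ converges to f(x) as n → ∞. -/
/-! On the cube `C(0, 2^n)` the point `u` lies in a tile of side `2^{1-n}`, and `P_n(g)(u)` is a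
convex combination of the values of `g` at the vertices of that tile, each at `ℓ₁`-distance at most
`n 2^{1-n}` from `u`; so `|P_n(g)(u) - g(u)| ≤ K n 2^{1-n}` when `g` is `K`-Lipschitz. For fixed
`x ∈ ℓ₁`, eventually `ρ_n(x) ∈ C(0, 2^n)`, and `τ_n(ρ_n(x)) → x` in `ℓ₁`, so
`Q_n(f)(x) - f(τ_n(ρ_n(x))) → 0` and `f(τ_n(ρ_n(x))) → f(x)`. -/

noncomputable section

open Filter Topology
open scoped Classical

/-- `π_R(t)`: the nearest point to `t` in `[−R/2, R/2]`. -/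
def clamp (R t : ℝ) : ℝ := max (-(R / 2)) (min (R / 2) t)

/-- `Π_R^n(x) = (π_R(x_1),…,π_R(x_n))`, the nearest-point retraction onto `C(0,R)`. -/
def clampCube {n : ℕ} (R : ℝ) (x : Fin n → ℝ) : Fin n → ℝ := fun i => clamp R (x i)

/-- The point `x^{ε,y}_{h,k} = y + 2^{−k−1} ε + 2^{−k} (ε_1 h_1, …, ε_n h_n)`. -/
def gridPt {n : ℕ} (ε : Fin n → Bool) (y : Fin n → ℝ) (h : Fin n → ℕ) (k : ℕ) :
    Fin n → ℝ :=
  fun i => y i + (2 : ℝ) ^ (-(k : ℤ) - 1) * bsgn (ε i) +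
    (2 : ℝ) ^ (-(k : ℤ)) * (bsgn (ε i) * (h i : ℝ))

/-- For `v ∈ C(0,2^n)`, an admissible choice of `ε ∈ {−1,1}^n` for a cube
`C(x^{ε,0}_{h,n−1}, 2^{1−n})` of the canonical tiling containing `v`. -/
def epsChoice {n : ℕ} (v : Fin n → ℝ) : Fin n → Bool := fun i => 0 ≤ v i

/-- For `v ∈ C(0,2^n)`, an admissible choice of `h ∈ {0,…,2^{2n−2}−1}^n` for a cube
`C(x^{ε,0}_{h,n−1}, 2^{1−n})` of the canonical tiling containing `v`. -/
def hChoice (n : ℕ) (v : Fin n → ℝ) : Fin n → ℕ :=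
  fun i => min (Int.toNat ⌊|v i| * (2 : ℝ) ^ ((n : ℤ) - 1)⌋) (2 ^ (2 * n - 2) - 1)

/-- The operator `P_n`: `P_n(g)(u) = Λ(g, C(x^{ε,0}_{h,n−1}, 2^{1−n}))(Π_{2^n}^n(u))`,
where `ε ∈ {−1,1}^n` and `h ∈ {0,…,2^{2n−2}−1}^n` are (admissibly) chosen so that
`Π_{2^n}^n(u) ∈ C(x^{ε,0}_{h,n−1}, 2^{1−n})`. -/
def Pn (n : ℕ) (g : (Fin n → ℝ) → ℝ) (u : Fin n → ℝ) : ℝ :=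
  lam g
    (gridPt (epsChoice (clampCube ((2 : ℝ) ^ n) u)) 0
      (hChoice n (clampCube ((2 : ℝ) ^ n) u)) (n - 1))
    ((2 : ℝ) ^ (1 - (n : ℤ)))
    (clampCube ((2 : ℝ) ^ n) u)

/-- The Banach space `ℓ₁` of absolutely summable real sequences. -/
abbrev EllOne : Type := lp (fun _ : ℕ => ℝ) 1

/-- The canonical injection `τ_n : ℓ₁^n → ℓ₁`, `τ_n(x) = (x_1,…,x_n,0,0,…)`. -/
def tau (n : ℕ) (x : Fin n → ℝ) : EllOne :=
  ⟨fun j => if h : j < n then x ⟨j, h⟩ else 0, by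
    refine (memℓp_zero ?_).of_exponent_ge zero_le_one
    refine (Set.finite_Iio n).subset fun j hj => ?_
    simp only [Set.mem_setOf_eq] at hj
    by_contra hc
    simp only [Set.mem_Iio, not_lt] at hc
    exact hj (dif_neg (not_lt.mpr hc))⟩

/-- The canonical projection `ρ_n : ℓ₁ → ℓ₁^n`, `ρ_n(x) = (x_1,…,x_n)`. -/
def rho (n : ℕ) (x : EllOne) : Fin n → ℝ := fun i => x (i : ℕ)

/-- The operator `Q_n` on `Lip_0(ℓ₁)`: `Q_n(f)(x) = P_n(f ∘ τ_n)(ρ_n(x))`. -/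
def Qn (n : ℕ) (f : EllOne → ℝ) (x : EllOne) : ℝ :=
  Pn n (fun u => f (tau n u)) (rho n x)

/-- `V_n`: the set of all vertices of all the cubes `C(x^{ε,0}_{h,n−1}, 2^{1−n})`,
`ε ∈ {−1,1}^n`, `h ∈ {0,…,2^{2n−2}−1}^n`. -/
def Vn (n : ℕ) : Set (Fin n → ℝ) :=
  {v | ∃ (ε : Fin n → Bool) (h : Fin n → ℕ) (δ : Fin n → Bool),
    (∀ i, h i ≤ 2 ^ (2 * n - 2) - 1) ∧
    v = vertex (gridPt ε 0 h (n - 1)) ((2 : ℝ) ^ (1 - (n : ℤ))) δ}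

open scoped NNReal

lemma abs_bsgn (b : Bool) : |bsgn b| = 1 := by
  cases b <;> simp [bsgn]

lemma sum_prod_ite_one_sub {ι R : Type*} [Fintype ι] [DecidableEq ι] [CommRing R] (a : ι → R) :
    ∑ δ : ι → Bool, ∏ i, (if δ i then a i else 1 - a i) = 1 := by
  rw [← Fintype.prod_sum (fun i (b : Bool) => if b then a i else 1 - a i)]
  simp

lemma abs_lam_sub_le {n : ℕ} {g : (Fin n → ℝ) → ℝ} {y v : Fin n → ℝ} {R C : ℝ} (hR : 0 < R)
    (hv : v ∈ cube y R) (hg : ∀ δ, |g (vertex y R δ) - g v| ≤ C) :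
    |lam g y R v - g v| ≤ C := by
  set a : Fin n → ℝ := fun i => (v i - y i + R / 2) / R
  set w : (Fin n → Bool) → ℝ := fun δ => ∏ i, if δ i then a i else 1 - a i
  have ha : ∀ i, 0 ≤ a i ∧ a i ≤ 1 := fun i => by
    have := abs_le.mp (hv i)
    exact ⟨div_nonneg (by linarith) hR.le, (div_le_one hR).mpr (by linarith)⟩
  have hw : ∀ δ, 0 ≤ w δ := fun δ => Finset.prod_nonneg fun i _ => by
    split_ifs <;> linarith [ha i]
  have hw1 : ∑ δ, w δ = 1 := sum_prod_ite_one_sub a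
  have hlam : lam g y R v - g v = ∑ δ, w δ * (g (vertex y R δ) - g v) := by
    simp only [mul_sub, Finset.sum_sub_distrib, ← Finset.sum_mul, hw1, one_mul]
    rfl
  calc |lam g y R v - g v| ≤ ∑ δ, |w δ * (g (vertex y R δ) - g v)| := by
        rw [hlam]; exact Finset.abs_sum_le_sum_abs _ _
    _ ≤ ∑ δ, w δ * C := Finset.sum_le_sum fun δ _ => by
        rw [abs_mul, abs_of_nonneg (hw δ)]; exact mul_le_mul_of_nonneg_left (hg δ) (hw δ)
    _ = C := by rw [← Finset.sum_mul, hw1, one_mul]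

lemma abs_vertex_sub_le {n : ℕ} {y v : Fin n → ℝ} {R : ℝ} (hR : 0 ≤ R) (hv : v ∈ cube y R)
    (δ : Fin n → Bool) (i : Fin n) : |vertex y R δ i - v i| ≤ R :=
  calc |vertex y R δ i - v i| = |R / 2 * bsgn (δ i) - (v i - y i)| := by
        rw [vertex]; ring_nf
    _ ≤ |R / 2 * bsgn (δ i)| + |v i - y i| := abs_sub _ _
    _ ≤ R / 2 + R / 2 := by
        rw [abs_mul, abs_bsgn, mul_one, abs_of_nonneg (by linarith)]; linarith [hv i]
    _ = R := add_halves R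

lemma min_toNat_floor_le_and_le_add_one {s : ℝ} {N : ℕ} (hs : 0 ≤ s) (hsN : s ≤ N) :
    ((min ⌊s⌋.toNat (N - 1) : ℕ) : ℝ) ≤ s ∧ s ≤ (min ⌊s⌋.toNat (N - 1) : ℕ) + 1 := by
  have hfloor : ((⌊s⌋.toNat : ℕ) : ℝ) = ⌊s⌋ := by
    exact_mod_cast Int.toNat_of_nonneg (Int.floor_nonneg.mpr hs)
  rcases le_total ⌊s⌋.toNat (N - 1) with h | h
  · rw [min_eq_left h, hfloor]
    exact ⟨Int.floor_le s, (Int.lt_floor_add_one s).le⟩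
  · rw [min_eq_right h]
    refine ⟨(Nat.cast_le.mpr h).trans (hfloor.le.trans (Int.floor_le s)), hsN.trans ?_⟩
    exact_mod_cast (by omega : N ≤ N - 1 + 1)

lemma abs_sub_bsgn_decide_mul (t c : ℝ) :
    |t - bsgn (decide (0 ≤ t)) * c| = |(|t|) - c| := by
  rcases le_or_gt 0 t with ht | ht
  · simp [bsgn, ht, abs_of_nonneg ht]
  · have hsgn : bsgn (decide (0 ≤ t)) = -1 := by simp [bsgn, ht.not_ge]
    rw [hsgn, abs_of_neg ht, ← abs_neg]
    congr 1
    ring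

/-- One coordinate of the tiling: the tile `[m/P, (m+1)/P]` has centre `(2m+1)/(2P)` and
half-width `1/(2P)`. -/
lemma abs_sub_bsgn_mul_center_le {t P : ℝ} (hP : 0 < P) {m : ℕ} (hm : (m : ℝ) ≤ |t| * P)
    (hm' : |t| * P ≤ m + 1) :
    |t - bsgn (decide (0 ≤ t)) * ((2 * m + 1) / (2 * P))| ≤ 1 / (2 * P) := by
  rw [abs_sub_bsgn_decide_mul,
    show |t| - (2 * m + 1) / (2 * P) = (2 * (|t| * P) - (2 * m + 1)) / (2 * P) by field_simp,
    abs_div, abs_of_pos (by positivity : (0 : ℝ) < 2 * P)]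
  gcongr
  rw [abs_le]
  constructor <;> linarith

lemma gridPt_zero_apply {n : ℕ} (ε : Fin n → Bool) (h : Fin n → ℕ) (k : ℕ) (i : Fin n) :
    gridPt ε 0 h k i = bsgn (ε i) * ((2 * h i + 1) / (2 * 2 ^ k)) := by
  rw [gridPt, show -(k : ℤ) - 1 = -((k + 1 : ℕ) : ℤ) by push_cast; ring, zpow_neg, zpow_neg,
    zpow_natCast, zpow_natCast, pow_succ]
  simp only [Pi.zero_apply]
  field_simp
  ring

lemma mem_cube_gridPt {n : ℕ} (hn : 1 ≤ n) {v : Fin n → ℝ} (hv : v ∈ cube 0 ((2 : ℝ) ^ n)) :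
    v ∈ cube (gridPt (epsChoice v) 0 (hChoice n v) (n - 1)) ((2 : ℝ) ^ (1 - (n : ℤ))) := by
  obtain ⟨k, rfl⟩ := Nat.exists_eq_add_of_le' hn
  intro i
  have hP : (0 : ℝ) < 2 ^ k := by positivity
  have hvi : |v i| * 2 ^ k ≤ ((2 ^ (2 * (k + 1) - 2) : ℕ) : ℝ) := by
    have := hv i
    rw [Pi.zero_apply, sub_zero, pow_succ, mul_div_cancel_right₀ _ two_ne_zero] at this
    rw [show 2 * (k + 1) - 2 = k + k by omega]
    push_cast
    rw [pow_add]
    gcongr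
  have hm := min_toNat_floor_le_and_le_add_one (by positivity) hvi
  have hrad : (2 : ℝ) ^ (1 - ((k + 1 : ℕ) : ℤ)) / 2 = 1 / (2 * 2 ^ k) := by
    rw [show (1 : ℤ) - ((k + 1 : ℕ) : ℤ) = -(k : ℤ) by push_cast; ring, zpow_neg, zpow_natCast]
    field_simp
  have hscale : (2 : ℝ) ^ (((k + 1 : ℕ) : ℤ) - 1) = 2 ^ k := by
    rw [Nat.cast_succ, add_sub_cancel_right, zpow_natCast]
  rw [hrad, gridPt_zero_apply, Nat.add_sub_cancel]
  simp only [hChoice, epsChoice, hscale]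
  exact abs_sub_bsgn_mul_center_le hP hm.1 hm.2

lemma clampCube_of_mem_cube {n : ℕ} {R : ℝ} {v : Fin n → ℝ} (hv : v ∈ cube 0 R) :
    clampCube R v = v := by
  funext i
  have := abs_le.mp (by simpa using hv i)
  rw [clampCube, clamp, min_eq_right this.2, max_eq_right this.1]

lemma abs_Pn_sub_le {n : ℕ} (hn : 1 ≤ n) {g : (Fin n → ℝ) → ℝ} {K : ℝ} (hK : 0 ≤ K)
    (hg : LipOnL1 K Set.univ g) {u : Fin n → ℝ} (hu : u ∈ cube 0 ((2 : ℝ) ^ n)) :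
    |Pn n g u - g u| ≤ K * (n * 2 ^ (1 - (n : ℤ))) := by
  rw [Pn, clampCube_of_mem_cube hu]
  have hmem := mem_cube_gridPt hn hu
  refine abs_lam_sub_le (by positivity) hmem fun δ => (hg _ trivial _ trivial).trans ?_
  gcongr
  calc ∑ i, |vertex _ _ δ i - u i| ≤ ∑ _i : Fin n, (2 : ℝ) ^ (1 - (n : ℤ)) :=
        Finset.sum_le_sum fun i _ => abs_vertex_sub_le (by positivity) hmem δ i
    _ = n * 2 ^ (1 - (n : ℤ)) := by simp

lemma norm_ellOne (w : EllOne) : ‖w‖ = ∑' j, |w j| := by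
  simp [lp.norm_eq_tsum_rpow (p := 1) (by norm_num) w]

lemma summable_abs_ellOne (w : EllOne) : Summable fun j => |w j| := by
  simpa using (lp.memℓp w).summable (p := 1) one_pos

lemma tau_apply (n : ℕ) (a : Fin n → ℝ) (j : ℕ) :
    tau n a j = if h : j < n then a ⟨j, h⟩ else 0 := rfl

lemma tau_sub (n : ℕ) (a b : Fin n → ℝ) : tau n a - tau n b = tau n (a - b) := by
  ext j
  simp only [lp.coeFn_sub, Pi.sub_apply, tau_apply]
  split_ifs <;> simp

lemma norm_tau (n : ℕ) (a : Fin n → ℝ) : ‖tau n a‖ = ∑ i, |a i| := by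
  rw [norm_ellOne, tsum_eq_sum (s := Finset.range n) fun j hj => by
      simp [tau_apply, dif_neg (by simpa using hj : ¬ j < n)],
    ← Fin.sum_univ_eq_sum_range (fun j => |tau n a j|)]
  exact Finset.sum_congr rfl fun i _ => by simp [tau_apply]

lemma lipOnL1_comp_tau {f : EllOne → ℝ} {K : ℝ≥0} (hf : LipschitzWith K f) (n : ℕ) :
    LipOnL1 K Set.univ fun u => f (tau n u) := fun a _ b _ => by
  have := hf.dist_le_mul (tau n a) (tau n b)
  rwa [Real.dist_eq, dist_eq_norm, tau_sub, norm_tau] at this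

lemma norm_tau_rho_sub (n : ℕ) (x : EllOne) : ‖tau n (rho n x) - x‖ = ∑' k, |x (k + n)| := by
  have hcoord : ∀ j, |(tau n (rho n x) - x) j| = if j < n then 0 else |x j| := fun j => by
    by_cases h : j < n <;> simp [tau_apply, rho, h]
  rw [norm_ellOne, ← (summable_abs_ellOne _).sum_add_tsum_nat_add n,
    Finset.sum_eq_zero fun j hj => by rw [hcoord, if_pos (Finset.mem_range.mp hj)], zero_add]
  exact tsum_congr fun k => by rw [hcoord, if_neg (by omega)]

lemma tendsto_tau_rho (x : EllOne) : Tendsto (fun n => tau n (rho n x)) atTop (𝓝 x) := by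
  rw [tendsto_iff_norm_sub_tendsto_zero]
  simpa only [norm_tau_rho_sub] using tendsto_sum_nat_add fun k => |x k|

lemma rho_mem_cube {n : ℕ} {x : EllOne} (hx : ‖x‖ ≤ (2 : ℝ) ^ n / 2) :
    rho n x ∈ cube 0 ((2 : ℝ) ^ n) := fun i => by
  simpa [rho] using (lp.norm_apply_le_norm one_ne_zero x i).trans hx

lemma tendsto_natCast_mul_two_zpow_one_sub :
    Tendsto (fun n : ℕ => (n : ℝ) * 2 ^ (1 - (n : ℤ))) atTop (𝓝 0) := by
  have h := (tendsto_pow_const_mul_const_pow_of_abs_lt_one 1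
    (show |(1 / 2 : ℝ)| < 1 by norm_num [abs_of_pos])).const_mul (2 : ℝ)
  rw [mul_zero] at h
  refine h.congr fun n => ?_
  rw [sub_eq_add_neg, zpow_add₀ two_ne_zero, zpow_neg, zpow_natCast, one_div, inv_pow]
  ring

theorem Qn_tendsto_general (f : EllOne → ℝ) (hf : ∃ K : ℝ≥0, LipschitzWith K f)
    (x : EllOne) :
    Tendsto (fun n => Qn n f x) atTop (nhds (f x)) := by
  obtain ⟨K, hK⟩ := hf
  have hx : ∀ᶠ n : ℕ in atTop, ‖x‖ ≤ (2 : ℝ) ^ n / 2 :=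
    ((tendsto_pow_atTop_atTop_of_one_lt one_lt_two).atTop_div_const two_pos).eventually_ge_atTop _
  have hclose : Tendsto (fun n => Qn n f x - f (tau n (rho n x))) atTop (𝓝 0) := by
    refine squeeze_zero_norm' ?_ (by simpa using
      tendsto_natCast_mul_two_zpow_one_sub.const_mul (K : ℝ))
    filter_upwards [eventually_ge_atTop 1, hx] with n hn hxn
    exact abs_Pn_sub_le hn K.2 (lipOnL1_comp_tau hK n) (rho_mem_cube hxn)
  simpa using hclose.add ((hK.continuous.tendsto x).comp (tendsto_tau_rho x))

/-- **Statement 12.** For every Lipschitz `f : ℓ₁ → ℝ` with `f(0) = 0` and every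
`x ∈ ℓ₁`, `Q_n(f)(x) → f(x)` as `n → ∞`. -/
theorem Qn_tendsto (f : EllOne → ℝ) (hf : ∃ K : ℝ≥0, LipschitzWith K f)
    (hf0 : f 0 = 0) (x : EllOne) :
    Tendsto (fun n => Qn n f x) atTop (nhds (f x)) :=
  Qn_tendsto_general f hf x
end
end

section
/- Let X be a separable Banach space and λ ≥ 1. Suppose there exists a sequence (T_n) of finite-rank bounded linear operators on X with ‖T_n‖ ≤ λ for all n which converges to the identity operator in the weak operator topology, i.e., for every x ∈ X and every x* ∈ X*, x*(T_n x) → x*(x). Then X has the λ-bounded approximation property. -/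
/-! Fix a finite `δ`-net `y₁, …, yₘ` of the compact set `K`. The operators `S ↦ (S yᵢ)ᵢ` send
`T n` to a sequence in `Xᵐ` converging weakly to `(yᵢ)ᵢ`, so by Mazur's lemma some convex
combination `S` of the `T n` is norm-close to the identity at every `yᵢ`. Convex combinations keep
finite rank and the bound `‖S‖ ≤ λ`, and the bound on `‖S‖` spreads the estimate from the net to
all of `K`. -/

noncomputable section

open Filter Topology

universe u

def HasBAP (X : Type*) [NormedAddCommGroup X] [NormedSpace ℝ X] (lam : ℝ) : Prop :=
  ∀ K : Set X, IsCompact K → ∀ ε : ℝ, 0 < ε →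
    ∃ T : X →L[ℝ] X, FiniteDimensional ℝ (LinearMap.range (T : X →ₗ[ℝ] X)) ∧
      ‖T‖ ≤ lam ∧ ∀ x ∈ K, ‖T x - x‖ ≤ ε

/-- **Mazur's lemma**. -/
theorem mem_closure_convexHull_range_of_tendsto_dual {E α : Type*} [AddCommGroup E]
    [Module ℝ E] [TopologicalSpace E] [IsTopologicalAddGroup E] [ContinuousSMul ℝ E]
    [LocallyConvexSpace ℝ E] {l : Filter α} [l.NeBot] {v : α → E} {a : E}
    (h : ∀ f : StrongDual ℝ E, Tendsto (fun n => f (v n)) l (𝓝 (f a))) :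
    a ∈ closure (convexHull ℝ (Set.range v)) := by
  by_contra ha
  obtain ⟨f, u, hlt, hu⟩ :=
    geometric_hahn_banach_closed_point (convex_convexHull ℝ _).closure isClosed_closure ha
  have : f a ≤ u := le_of_tendsto (h f) <| Eventually.of_forall fun n =>
    (hlt _ <| subset_closure <| subset_convexHull ℝ _ ⟨n, rfl⟩).le
  linarith

theorem Pi.tendsto_dual_of_forall_tendsto_dual {ι α : Type*} [Fintype ι] {E : ι → Type*}
    [∀ i, AddCommGroup (E i)] [∀ i, Module ℝ (E i)] [∀ i, TopologicalSpace (E i)]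
    {l : Filter α} {v : α → ∀ i, E i} {a : ∀ i, E i}
    (h : ∀ i (f : StrongDual ℝ (E i)), Tendsto (fun n => f (v n i)) l (𝓝 (f (a i))))
    (f : StrongDual ℝ (∀ i, E i)) : Tendsto (fun n => f (v n)) l (𝓝 (f a)) := by
  classical
  simp only [← ContinuousLinearMap.sum_comp_single (L := f)]
  exact tendsto_finsetSum _ fun i _ => h i _

theorem exists_mem_convexHull_forall_norm_apply_sub_lt {X ι α : Type*} [NormedAddCommGroup X]
    [NormedSpace ℝ X] [Finite ι] {l : Filter α} [l.NeBot] {T : α → X →L[ℝ] X}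
    (hT : ∀ (x : X) (φ : StrongDual ℝ X), Tendsto (fun n => φ (T n x)) l (𝓝 (φ x)))
    (y : ι → X) {ε : ℝ} (hε : 0 < ε) :
    ∃ S ∈ convexHull ℝ (Set.range T), ∀ i, ‖S (y i) - y i‖ < ε := by
  have := Fintype.ofFinite ι
  let Φ : (X →L[ℝ] X) →L[ℝ] (ι → X) :=
    ContinuousLinearMap.pi fun i => ContinuousLinearMap.apply ℝ X (y i)
  have hy : y ∈ closure (convexHull ℝ (Set.range (Φ ∘ T))) :=
    mem_closure_convexHull_range_of_tendsto_dual <|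
      Pi.tendsto_dual_of_forall_tendsto_dual fun i => hT (y i)
  have himage : convexHull ℝ (Φ '' Set.range T) = Φ '' convexHull ℝ (Set.range T) :=
    ((Φ : (X →L[ℝ] X) →ₗ[ℝ] (ι → X)).image_convexHull _).symm
  rw [Set.range_comp, himage] at hy
  obtain ⟨_, ⟨S, hS, rfl⟩, hSy⟩ := Metric.mem_closure_iff.1 hy ε hε
  refine ⟨S, hS, fun i => ?_⟩
  rw [dist_comm, dist_eq_norm] at hSy
  exact (norm_le_pi_norm (Φ S - y) i).trans_lt hSy

theorem convex_setOf_finiteDimensional_range {R M N : Type*} [Field R] [PartialOrder R]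
    [AddCommGroup M] [Module R M] [AddCommGroup N] [Module R N] :
    Convex R {f : M →ₗ[R] N | FiniteDimensional R (LinearMap.range f)} := by
  intro f (hf : FiniteDimensional R (LinearMap.range f)) g
    (hg : FiniteDimensional R (LinearMap.range g)) a b _ _ _
  exact Submodule.finiteDimensional_of_le (S₂ := LinearMap.range f ⊔ LinearMap.range g) <|
    (LinearMap.range_add_le _ _).trans <|
      sup_le_sup (LinearMap.range_smul_le_range f a) (LinearMap.range_smul_le_range g b)

theorem ContinuousLinearMap.finiteDimensional_range_and_norm_le_of_mem_convexHull {X : Type*}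
    [NormedAddCommGroup X] [NormedSpace ℝ X] {α : Type*} {T : α → X →L[ℝ] X} {lam : ℝ}
    (hfr : ∀ n, FiniteDimensional ℝ (LinearMap.range ((T n) : X →ₗ[ℝ] X)))
    (hnorm : ∀ n, ‖T n‖ ≤ lam) {S : X →L[ℝ] X} (hS : S ∈ convexHull ℝ (Set.range T)) :
    FiniteDimensional ℝ (LinearMap.range (S : X →ₗ[ℝ] X)) ∧ ‖S‖ ≤ lam := by
  have hconvex : Convex ℝ ({S : X →L[ℝ] X |
      FiniteDimensional ℝ (LinearMap.range (S : X →ₗ[ℝ] X))} ∩ Metric.closedBall 0 lam) :=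
    Convex.inter (convex_setOf_finiteDimensional_range (R := ℝ) (M := X) (N := X)
      |>.linear_preimage (ContinuousLinearMap.coeLM ℝ)) (convex_closedBall 0 lam)
  have hrange : Set.range T ⊆ {S : X →L[ℝ] X |
      FiniteDimensional ℝ (LinearMap.range (S : X →ₗ[ℝ] X))} ∩ Metric.closedBall 0 lam :=
    Set.range_subset_iff.2 fun n => ⟨hfr n, mem_closedBall_zero_iff.2 (hnorm n)⟩
  obtain ⟨hSfr, hSnorm⟩ := convexHull_min hrange hconvex hS
  exact ⟨hSfr, mem_closedBall_zero_iff.1 hSnorm⟩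

theorem ContinuousLinearMap.norm_apply_sub_le_of_subset_iUnion_ball {𝕜 E : Type*}
    [NontriviallyNormedField 𝕜] [SeminormedAddCommGroup E] [NormedSpace 𝕜 E] (S : E →L[𝕜] E)
    {K t : Set E} {δ η : ℝ} (hK : K ⊆ ⋃ y ∈ t, Metric.ball y δ) (ht : ∀ y ∈ t, ‖S y - y‖ ≤ η)
    {x : E} (hx : x ∈ K) : ‖S x - x‖ ≤ η + (‖S‖ + 1) * δ := by
  obtain ⟨y, hy, hxy⟩ := Set.mem_iUnion₂.1 (hK hx)
  rw [Metric.mem_ball, dist_eq_norm] at hxy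
  calc ‖S x - x‖ = ‖(S y - y) + S (x - y) - (x - y)‖ := by rw [map_sub]; abel_nf
    _ ≤ ‖S y - y‖ + ‖S (x - y)‖ + ‖x - y‖ :=
      (norm_sub_le _ _).trans (by gcongr; exact norm_add_le _ _)
    _ ≤ η + (‖S‖ + 1) * δ := by nlinarith [ht y hy, S.le_opNorm (x - y), norm_nonneg S]

theorem hasBAP_of_weak_operator_limit_general
    (X : Type u) [NormedAddCommGroup X] [NormedSpace ℝ X]
    (lam : ℝ)
    (T : ℕ → X →L[ℝ] X)
    (hfr : ∀ n, FiniteDimensional ℝ (LinearMap.range ((T n) : X →ₗ[ℝ] X)))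
    (hnorm : ∀ n, ‖T n‖ ≤ lam)
    (hweak : ∀ (x : X) (φ : StrongDual ℝ X),
      Tendsto (fun n => φ (T n x)) atTop (nhds (φ x))) :
    HasBAP X lam := by
  intro K hK ε hε
  have hlam : 0 ≤ lam := (norm_nonneg _).trans (hnorm 0)
  set δ := ε / (2 * (lam + 1))
  obtain ⟨t, -, htfin, hKt⟩ := hK.finite_cover_balls (e := δ) (by positivity)
  have := htfin.to_subtype
  obtain ⟨S, hS, hSt⟩ :=
    exists_mem_convexHull_forall_norm_apply_sub_lt hweak ((↑) : t → X) (half_pos hε)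
  obtain ⟨hSfr, hSnorm⟩ :=
    ContinuousLinearMap.finiteDimensional_range_and_norm_le_of_mem_convexHull hfr hnorm hS
  refine ⟨S, hSfr, hSnorm, fun x hx => ?_⟩
  calc ‖S x - x‖ ≤ ε / 2 + (‖S‖ + 1) * δ :=
        S.norm_apply_sub_le_of_subset_iUnion_ball hKt (fun y hy => (hSt ⟨y, hy⟩).le) hx
    _ ≤ ε / 2 + (lam + 1) * δ := by gcongr
    _ = ε := by simp only [δ]; field_simp; ring

/-- **Statement 15.** If a separable Banach space `X` admits a sequence of finite-rank
bounded linear operators `T n` with `‖T n‖ ≤ λ` converging to the identity in the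
weak operator topology, then `X` has the `λ`-bounded approximation property. -/
theorem hasBAP_of_weak_operator_limit
    (X : Type u) [NormedAddCommGroup X] [NormedSpace ℝ X] [CompleteSpace X]
    [TopologicalSpace.SeparableSpace X]
    (lam : ℝ) (hlam : 1 ≤ lam)
    (T : ℕ → X →L[ℝ] X)
    (hfr : ∀ n, FiniteDimensional ℝ (LinearMap.range ((T n) : X →ₗ[ℝ] X)))
    (hnorm : ∀ n, ‖T n‖ ≤ lam)
    (hweak : ∀ (x : X) (φ : StrongDual ℝ X),
      Tendsto (fun n => φ (T n x)) atTop (nhds (φ x))) :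
    HasBAP X lam :=
  hasBAP_of_weak_operator_limit_general X lam T hfr hnorm hweak
end
end
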